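/- arXiv:2604.12547 — 4 statements merged into one kernel-verified Lean document; each statement's English description precedes it below -/
import Mathlib

section
/- For any commutative unitary ring A, elements a_1,...,a_n ∈ A^n (n ≥ 2) and b_1,...,b_m ∈ A^m (m ≥ 2), if (b_1,...,b_m) is a λ-quiddity over A, then the sum (a_1,...,a_n) ⊕ (b_1,...,b_m) := (a_1+b_m, a_2,...,a_{n-1}, a_n+b_1, b_2,...,b_{m-1}) is a λ-quiddity over A if and only if (a_1,...,a_n) is a λ-quiddity over A. -/
/-- The elementary matrix [[a, -1], [1, 0]]. -/
def qmat {A : Type*} [CommRing A] (a : A) : Matrix (Fin 2) (Fin 2) A :=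
  !![a, -1; 1, 0]

/-- `Mn [a₁, …, aₙ] = qmat aₙ * ⋯ * qmat a₁`. -/
def Mn {A : Type*} [CommRing A] (l : List A) : Matrix (Fin 2) (Fin 2) A :=
  (l.reverse.map qmat).prod

/-- A λ-quiddity: the associated matrix product is `±Id`. -/
def IsQuiddity {A : Type*} [CommRing A] (l : List A) : Prop :=
  Mn l = 1 ∨ Mn l = -1

/-- Explicit inverse of `qmat a`. -/
def qinv {A : Type*} [CommRing A] (a : A) : Matrix (Fin 2) (Fin 2) A :=
  !![0, 1; -1, a]

section aux
variable {A : Type*} [CommRing A]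

lemma qmat_mul_qinv (a : A) : qmat a * qinv a = 1 := by
  ext i j
  fin_cases i <;> fin_cases j <;>
    simp [qmat, qinv, Matrix.mul_apply, Fin.sum_univ_succ, Matrix.one_apply]

lemma qinv_mul_qmat (a : A) : qinv a * qmat a = 1 := by
  ext i j
  fin_cases i <;> fin_cases j <;>
    simp [qmat, qinv, Matrix.mul_apply, Fin.sum_univ_succ, Matrix.one_apply]

lemma qinv_zero_sq : qinv (0 : A) * qinv 0 = -1 := by
  ext i j
  fin_cases i <;> fin_cases j <;>
    simp [qinv, Matrix.mul_apply, Fin.sum_univ_succ, Matrix.one_apply]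

lemma qmat_add_right (x v : A) : qmat (x + v) = qmat x * qinv 0 * qmat v := by
  ext i j
  fin_cases i <;> fin_cases j <;>
    simp [qmat, qinv, Matrix.mul_apply, Fin.sum_univ_succ, add_comm]

lemma qinv_mul_qmat_add (u y : A) : qinv u * qmat (y + u) = qinv 0 * qmat y := by
  ext i j
  fin_cases i <;> fin_cases j <;>
    simp [qmat, qinv, Matrix.mul_apply, Fin.sum_univ_succ]

lemma Mn_nil : Mn ([] : List A) = 1 := rfl

lemma Mn_append (l l' : List A) : Mn (l ++ l') = Mn l' * Mn l := by
  simp [Mn, List.reverse_append]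

lemma Mn_cons (a : A) (l : List A) : Mn (a :: l) = Mn l * qmat a := by
  simp [Mn]

lemma Mn_singleton (a : A) : Mn [a] = qmat a := by
  simp [Mn]

/-- Key conjugation lemma. -/
lemma conj_pm_iff (W W' Z : Matrix (Fin 2) (Fin 2) A)
    (h1 : W * W' = -1) (h2 : W' * W = -1) :
    (W' * Z * W = 1 ∨ W' * Z * W = -1) ↔ (Z = 1 ∨ Z = -1) := by
  have e : W * (W' * Z * W) * W' = Z := by
    have h3 : W * (W' * Z * W) * W' = (W * W') * Z * (W * W') := by noncomm_ring
    rw [h3, h1]; simp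
  constructor
  · rintro (h | h)
    · right
      rw [h, mul_one, h1] at e
      exact e.symm
    · left
      rw [h, mul_neg_one, neg_mul, h1, neg_neg] at e
      exact e.symm
  · rintro (h | h)
    · right; rw [h, mul_one, h2]
    · left; rw [h, mul_neg_one, neg_mul, h2, neg_neg]

end aux

/-- If (b₁,…,bₘ) = (u, us…, v) is a λ-quiddity (m ≥ 2) and (a₁,…,aₙ) = (x, xs…, y)
is any tuple (n ≥ 2), then the sum (a₁+bₘ, a₂,…,aₙ₋₁, aₙ+b₁, b₂,…,bₘ₋₁)
is a λ-quiddity iff (a₁,…,aₙ) is. -/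
theorem quiddity_oplus_iff {A : Type*} [CommRing A]
    (x y u v : A) (xs us : List A)
    (hb : IsQuiddity (u :: us ++ [v])) :
    IsQuiddity ((x + v) :: xs ++ [y + u] ++ us) ↔ IsQuiddity (x :: xs ++ [y]) := by
  have hB : Mn (u :: us ++ [v]) = qmat v * Mn us * qmat u := by
    simp [Mn_cons, Mn_append, Mn_singleton, Mn_nil, mul_assoc]
  have hA : Mn (x :: xs ++ [y]) = qmat y * Mn xs * qmat x := by
    simp [Mn_cons, Mn_append, Mn_singleton, Mn_nil, mul_assoc]
  have hS : Mn ((x + v) :: xs ++ [y + u] ++ us)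
      = Mn us * qmat (y + u) * Mn xs * qmat (x + v) := by
    simp [Mn_cons, Mn_append, Mn_singleton, Mn_nil, mul_assoc]
  -- abbreviations
  set P := Mn xs with hP
  set Q := Mn us with hQ
  rw [IsQuiddity, IsQuiddity, hS, hA]
  rw [IsQuiddity, hB] at hb
  -- from hb recover Q
  have hQeq : ∀ E : Matrix (Fin 2) (Fin 2) A, qmat v * Q * qmat u = E →
      Q = qinv v * E * qinv u := by
    intro E hE
    calc Q = (qinv v * qmat v) * Q * (qmat u * qinv u) := by
            rw [qinv_mul_qmat, qmat_mul_qinv]; noncomm_ring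
      _ = qinv v * (qmat v * Q * qmat u) * qinv u := by noncomm_ring
      _ = qinv v * E * qinv u := by rw [hE]
  set W : Matrix (Fin 2) (Fin 2) A := qinv 0 * qmat v with hW
  set W' : Matrix (Fin 2) (Fin 2) A := qinv v * qinv 0 with hW'
  have h1 : W * W' = -1 := by
    calc W * W' = qinv 0 * (qmat v * qinv v) * qinv 0 := by rw [hW, hW']; noncomm_ring
      _ = qinv 0 * qinv 0 := by rw [qmat_mul_qinv]; noncomm_ring
      _ = -1 := qinv_zero_sq
  have h2 : W' * W = -1 := by
    calc W' * W = qinv v * (qinv 0 * qinv 0) * qmat v := by rw [hW, hW']; noncomm_ring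
      _ = qinv v * (-1) * qmat v := by rw [qinv_zero_sq]
      _ = -(qinv v * qmat v) := by noncomm_ring
      _ = -1 := by rw [qinv_mul_qmat]
  have key : ∀ E : Matrix (Fin 2) (Fin 2) A,
      Q = qinv v * E * qinv u →
      Q * qmat (y + u) * P * qmat (x + v)
        = qinv v * E * (qinv 0 * qmat y * P * qmat x * qinv 0) * qmat v := by
    intro E hE
    rw [hE, qmat_add_right x v]
    calc qinv v * E * qinv u * qmat (y + u) * P * (qmat x * qinv 0 * qmat v)
        = qinv v * E * (qinv u * qmat (y + u)) * P * qmat x * qinv 0 * qmat v := by noncomm_ring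
      _ = qinv v * E * (qinv 0 * qmat y) * P * qmat x * qinv 0 * qmat v := by
            rw [qinv_mul_qmat_add]
      _ = qinv v * E * (qinv 0 * qmat y * P * qmat x * qinv 0) * qmat v := by noncomm_ring
  rcases hb with hb | hb
  · have hQ1 := hQeq 1 hb
    have hkey := key 1 hQ1
    rw [hkey]
    have : qinv v * 1 * (qinv 0 * qmat y * P * qmat x * qinv 0) * qmat v
        = W' * (qmat y * P * qmat x) * W := by rw [hW, hW']; noncomm_ring
    rw [this]
    exact conj_pm_iff W W' _ h1 h2
  · have hQ1 := hQeq (-1) hb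
    have hkey := key (-1) hQ1
    rw [hkey]
    have : qinv v * (-1) * (qinv 0 * qmat y * P * qmat x * qinv 0) * qmat v
        = -(W' * (qmat y * P * qmat x) * W) := by rw [hW, hW']; noncomm_ring
    rw [this]
    rw [neg_eq_iff_eq_neg, neg_eq_iff_eq_neg, neg_neg, or_comm]
    exact conj_pm_iff W W' _ h1 h2
end

section
/- Every matrix M in SL_2(ℤ) can be written as M = T^{a_n} S T^{a_{n-1}} S ··· T^{a_1} S for some n ≥ 1 and positive integers a_1,...,a_n, where T = [[1,1],[0,1]] and S = [[0,-1],[1,0]]. -/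
/-- T = [[1,1],[0,1]] -/
def Tm : Matrix (Fin 2) (Fin 2) ℤ := !![1, 1; 0, 1]

/-- S = [[0,-1],[1,0]] -/
def Sm : Matrix (Fin 2) (Fin 2) ℤ := !![0, -1; 1, 0]

/-! `SL(2, ℤ)` is generated as a monoid by `S`, `T`, `S⁻¹ = -S` and `T⁻¹`, and each of these is
already a word `T^{aₙ} S ⋯ T^{a₁} S` with positive exponents: the short words below come from the
relation `(TS)³ = -1`, which also gives `1 = (TS)⁶`. Such words are closed under products. -/

open Matrix Matrix.SpecialLinearGroup ModularGroup MatrixGroups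

/-- The word `T^{aₙ} S ⋯ T^{a₁} S` for `l = [a₁, …, aₙ]`. -/
def tsWord (l : List ℕ) : Matrix (Fin 2) (Fin 2) ℤ :=
  (l.map fun a => Tm ^ a * Sm).reverse.prod

lemma tsWord_append (l₁ l₂ : List ℕ) : tsWord (l₁ ++ l₂) = tsWord l₂ * tsWord l₁ := by
  simp [tsWord]

lemma Tm_pow_mul_Sm (a : ℕ) : Tm ^ a * Sm = !![(a : ℤ), -1; 1, 0] := by
  rw [show Tm = (T : Matrix (Fin 2) (Fin 2) ℤ) from rfl, ← coe_pow, ← zpow_natCast, coe_T_zpow]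
  simp [Sm]

lemma tsWord_eq (l : List ℕ) :
    tsWord l = (l.map fun a : ℕ => !![(a : ℤ), -1; 1, 0]).reverse.prod := by
  simp_rw [tsWord, Tm_pow_mul_Sm]

def tsWords : Submonoid (Matrix (Fin 2) (Fin 2) ℤ) where
  carrier := {M | ∃ l : List ℕ, l ≠ [] ∧ (∀ a ∈ l, 1 ≤ a) ∧ tsWord l = M}
  one_mem' := ⟨[1, 1, 1, 1, 1, 1], by simp, by simp, by simp [tsWord_eq, one_fin_two]⟩
  mul_mem' := by
    rintro _ _ ⟨l₁, hne₁, hpos₁, rfl⟩ ⟨l₂, -, hpos₂, rfl⟩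
    exact ⟨l₂ ++ l₁, by simp [hne₁], List.forall_mem_append.2 ⟨hpos₂, hpos₁⟩, tsWord_append l₂ l₁⟩

lemma Sm_mem_tsWords : Sm ∈ tsWords :=
  ⟨[1, 1, 1, 1, 1, 2, 1, 1], by simp, by simp, by simp [tsWord_eq, Sm]⟩

lemma neg_Sm_mem_tsWords : -Sm ∈ tsWords :=
  ⟨[1, 1, 2, 1, 1], by simp, by simp, by simp [tsWord_eq, Sm]⟩

lemma Tm_mem_tsWords : Tm ∈ tsWords :=
  ⟨[1, 1, 1, 1, 1, 2], by simp, by simp, by simp [tsWord_eq, Tm]⟩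

lemma inv_Tm_mem_tsWords : !![1, -1; 0, 1] ∈ tsWords :=
  ⟨[1, 1, 1, 1, 2, 1, 1], by simp, by simp, by simp [tsWord_eq]⟩

lemma coe_mem_tsWords (g : SL(2, ℤ)) : (g : Matrix (Fin 2) (Fin 2) ℤ) ∈ tsWords := by
  have hgen : Submonoid.closure ({S, T} ∪ {S, T}⁻¹) ≤ tsWords.comap coeMonoidHom := by
    rw [Submonoid.closure_le]
    rintro h ((rfl | rfl) | (hh | hh))
    · exact Sm_mem_tsWords
    · exact Tm_mem_tsWords
    · simpa [inv_eq_iff_eq_inv.1 hh, S_inv, Sm] using neg_Sm_mem_tsWords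
    · simpa [inv_eq_iff_eq_inv.1 hh, coe_T_inv] using inv_Tm_mem_tsWords
  rw [← Subgroup.closure_toSubmonoid, SpecialLinearGroup.SL2Z_generators] at hgen
  exact hgen (Subgroup.mem_top g)

/-- Every matrix of determinant 1 over ℤ is T^{aₙ} S ⋯ T^{a₁} S with n ≥ 1 and
all aᵢ positive integers. -/
theorem exists_TS_factorization (M : Matrix (Fin 2) (Fin 2) ℤ) (hM : M.det = 1) :
    ∃ (n : ℕ) (a : Fin n → ℕ), 1 ≤ n ∧ (∀ i, 1 ≤ a i) ∧
      M = ((List.ofFn fun i => Tm ^ a i * Sm).reverse).prod := by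
  obtain ⟨l, hne, hpos, hl⟩ := coe_mem_tsWords ⟨M, hM⟩
  refine ⟨l.length, fun i => l[(i : ℕ)], List.length_pos_iff.2 hne,
    fun i => hpos _ (l.getElem_mem _), ?_⟩
  rw [List.ofFn_getElem_eq_map l fun a => Tm ^ a * Sm]
  exact hl.symm
end

section
/- Over the field ℚ, for every integer n ≥ 2 the (n+3)-tuple (2n+1, (n+1)/(2n+1), 3, 2, 2, ..., 2, 2n/(2n+1)) (with n-1 entries equal to 2 between the 3 and the final entry) is a λ-quiddity, i.e. the corresponding product M_{n+3} of matrices [[a_i,-1],[1,0]] equals ±Id. -/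
lemma qmat_two_pow (k : ℕ) :
    (qmat (2 : ℚ)) ^ k = !![(k : ℚ) + 1, -(k : ℚ); (k : ℚ), 1 - (k : ℚ)] := by
  induction k with
  | zero => simp [qmat]; ext i j; fin_cases i <;> fin_cases j <;> simp
  | succ k ih =>
    rw [pow_succ, ih, qmat]
    ext i j
    fin_cases i <;> fin_cases j <;>
      simp [Matrix.mul_apply, Fin.sum_univ_two] <;> ring

/-- Over ℚ, for n ≥ 2, the (n+3)-tuple (2n+1, (n+1)/(2n+1), 3, 2, …, 2, 2n/(2n+1))
(with n-1 entries equal to 2) is a λ-quiddity. -/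
theorem quiddity_rat_family (n : ℕ) (hn : 2 ≤ n) :
    IsQuiddity
      (([2 * (n : ℚ) + 1, ((n : ℚ) + 1) / (2 * (n : ℚ) + 1), 3]
        ++ List.replicate (n - 1) (2 : ℚ)
        ++ [2 * (n : ℚ) / (2 * (n : ℚ) + 1)]) : List ℚ) := by
  right
  have hcast : ((n - 1 : ℕ) : ℚ) = (n : ℚ) - 1 := by
    have : (1 : ℕ) ≤ n := by omega
    push_cast [this]; ring
  have hne : 2 * (n : ℚ) + 1 ≠ 0 := by positivity
  unfold Mn
  simp only [List.reverse_append, List.reverse_cons, List.reverse_nil,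
    List.reverse_replicate, List.nil_append, List.cons_append, List.map_cons,
    List.map_append, List.map_replicate, List.prod_cons, List.prod_append,
    List.prod_replicate, List.map_nil, List.prod_nil, mul_one]
  rw [qmat_two_pow, hcast]
  ext i j
  fin_cases i <;> fin_cases j <;>
    · simp [qmat, Matrix.mul_apply, Fin.sum_univ_two]
      field_simp
      ring
end

section
/- Over ℤ[i], the quadruple (0, z, 0, -z) is a λ-quiddity for every z ∈ ℤ[i], and moreover for z = i it is irreducible: (0, i, 0, -i) cannot be written, up to cyclic equivalence and reversal, as (a_1,...,a_m) ⊕ (b_1,...,b_l) with (b_1,...,b_l) a λ-quiddity and m, l ≥ 3. -/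
/-- Equivalence: obtained by a cyclic rotation of the tuple or of its reversal. -/
def Equiv2 {A : Type*} (l l2 : List A) : Prop :=
  ∃ k : ℕ, l2 = l.rotate k ∨ l2 = l.reverse.rotate k

/-- `l` is a sum (a₁,…,aₘ) ⊕ (b₁,…,b_l) with m, l ≥ 3 and (b₁,…,b_l) a λ-quiddity. -/
def IsSum {A : Type*} [CommRing A] (l : List A) : Prop :=
  ∃ (x y u v : A) (xs us : List A),
    1 ≤ xs.length ∧ 1 ≤ us.length ∧
    IsQuiddity (u :: us ++ [v]) ∧
    l = (x + v) :: xs ++ [y + u] ++ us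

/-- A λ-quiddity of size ≥ 3 is reducible if equivalent to such a sum. -/
def Reducible {A : Type*} [CommRing A] (l : List A) : Prop :=
  ∃ l2, Equiv2 l l2 ∧ IsSum l2

/-- An irreducible λ-quiddity. -/
def Irr {A : Type*} [CommRing A] (l : List A) : Prop :=
  IsQuiddity l ∧ 3 ≤ l.length ∧ ¬ Reducible l

lemma quid3 (u b v : GaussianInt) (h : IsQuiddity [u, b, v]) : b = 1 ∨ b = -1 := by
  have h11 : Mn [u, b, v] 1 1 = -b := by
    simp [Mn, qmat, Matrix.mul_fin_two]
  rcases h with h | h <;> rw [h] at h11 <;> simp at h11 <;>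
    first
    | (left; linear_combination h11) | (right; linear_combination h11)
    | (left; linear_combination -h11) | (right; linear_combination -h11)

/-- Over ℤ[i], (0, z, 0, -z) is always a λ-quiddity, and (0, i, 0, -i) is irreducible. -/
theorem gaussian_quiddity :
    (∀ z : GaussianInt, IsQuiddity [0, z, 0, -z]) ∧
    Irr ([0, Zsqrtd.sqrtd, 0, -Zsqrtd.sqrtd] : List GaussianInt) := by
  have hq : ∀ z : GaussianInt, IsQuiddity [0, z, 0, -z] := fun z =>
    Or.inl (by simp [Mn, qmat, Matrix.mul_fin_two, Matrix.one_fin_two])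
  refine ⟨hq, hq _, by simp, ?_⟩
  rintro ⟨l2, ⟨k, hrot⟩, x, y, u, v, xs, us, hxs, hus, hquid, hl2⟩
  have hlen : l2.length = 4 := by
    rcases hrot with h | h <;> simp [h]
  rw [hl2] at hlen
  simp at hlen
  have hus1 : us.length = 1 := by omega
  obtain ⟨b, rfl⟩ := List.length_eq_one_iff.mp hus1
  have hb : b = 1 ∨ b = -1 := quid3 u b v hquid
  have hmem : b ∈ l2 := by rw [hl2]; simp
  have hmem2 : b = 0 ∨ b = Zsqrtd.sqrtd ∨ b = -Zsqrtd.sqrtd := by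
    rcases hrot with h | h <;> rw [h] at hmem <;> simp at hmem <;> tauto
  rcases hb with rfl | rfl <;> rcases hmem2 with h | h | h <;>
    first
    | exact one_ne_zero h
    | exact absurd h (by decide)
end
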